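/- arXiv:2206.01068 — 2 statements merged into one kernel-verified Lean document; each statement's English description precedes it below -/
import Mathlib

section
/- Let Ĥ be a weakly balanced bipartite signed graph with a special min ordering. Then there do not exist a walk a_0, b_0, a_1, b_1, …, a_k, b_k, c in H all of whose edges a_0b_0, b_0a_1, a_1b_1, …, b_kc are blue, together with a bicoloured edge de, such that a_0 < d < c (in part A) and b_0 < e (in part B). -/
variable {A B : Type*}

/-- A min ordering of a bipartite graph: a pair of linear (strict total) orders on the
two parts such that if `ab`, `a'b'` are edges with `a <_A a'` and `b' <_B b`, then `ab'`
is an edge. -/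
def IsMinOrdering (E : A → B → Prop) (ltA : A → A → Prop) (ltB : B → B → Prop) : Prop :=
  IsStrictTotalOrder A ltA ∧ IsStrictTotalOrder B ltB ∧
    ∀ a a' b b', E a b → E a' b' → ltA a a' → ltB b' b → E a b'

/-- A special min ordering of a weakly balanced bipartite signed graph: a min ordering
such that at each vertex all bicoloured neighbours precede all blue neighbours. -/
def IsSpecialMinOrdering (E bic : A → B → Prop)
    (ltA : A → A → Prop) (ltB : B → B → Prop) : Prop :=
  IsMinOrdering E ltA ltB ∧
    (∀ (a : A) (b b' : B), bic a b → E a b' → ¬ bic a b' → ltB b b') ∧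
    (∀ (b : B) (a a' : A), bic a b → E a' b → ¬ bic a' b → ltA a a')

/-!
Call a blue edge `ab` *below* a bicoloured edge `de` if `a < d` and `b < e`. Then `d` is not
adjacent to `b`: by the special condition, a bicoloured edge `db` would force `d < a` and a
blue one `e < b`. With the min property this forces every neighbour of `b` to precede `d`
and, symmetrically, every neighbour of `a` to precede `e`. So along a blue walk starting
below `de` every edge stays below `de`, and the last vertex `c` precedes `d`.
-/

theorem IsMinOrdering.swap {E : A → B → Prop} {ltA : A → A → Prop} {ltB : B → B → Prop}
    (h : IsMinOrdering E ltA ltB) : IsMinOrdering (flip E) ltB ltA :=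
  ⟨h.2.1, h.1, fun _ _ _ _ hab hab' hbb' haa' => h.2.2 _ _ _ _ hab' hab haa' hbb'⟩

namespace IsSpecialMinOrdering

variable {E bic : A → B → Prop} {ltA : A → A → Prop} {ltB : B → B → Prop}

theorem swap (hs : IsSpecialMinOrdering E bic ltA ltB) :
    IsSpecialMinOrdering (flip E) (flip bic) ltB ltA :=
  ⟨hs.1.swap, hs.2.2, hs.2.1⟩

theorem not_adj_bic_fst (hs : IsSpecialMinOrdering E bic ltA ltB) {a d : A} {b e : B}
    (hde : bic d e) (hab : E a b) (hab' : ¬ bic a b) (had : ltA a d) (hbe : ltB b e) :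
    ¬ E d b := by
  have := hs.1.1
  have := hs.1.2.1
  intro hdb
  by_cases hdb' : bic d b
  · exact asymm had (hs.2.2 b d a hdb' hab hab')
  · exact asymm hbe (hs.2.1 d e b hde hdb hdb')

theorem lt_bic_fst_of_adj (hs : IsSpecialMinOrdering E bic ltA ltB)
    (hbic : ∀ a b, bic a b → E a b) {a a' d : A} {b e : B}
    (hde : bic d e) (hab : E a b) (hab' : ¬ bic a b) (had : ltA a d) (hbe : ltB b e)
    (ha'b : E a' b) : ltA a' d := by
  have := hs.1.1
  have hdb := hs.not_adj_bic_fst hde hab hab' had hbe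
  rcases trichotomous_of ltA a' d with h | rfl | h
  · exact h
  · exact absurd ha'b hdb
  · exact absurd (hs.1.2.2 d a' e b (hbic d e hde) ha'b h hbe) hdb

theorem lt_bic_snd_of_adj (hs : IsSpecialMinOrdering E bic ltA ltB)
    (hbic : ∀ a b, bic a b → E a b) {a d : A} {b b' e : B}
    (hde : bic d e) (hab : E a b) (hab' : ¬ bic a b) (had : ltA a d) (hbe : ltB b e)
    (hab'' : E a b') : ltB b' e :=
  hs.swap.lt_bic_fst_of_adj (fun b a h => hbic a b h) hde hab hab' hbe had hab''

theorem blue_walk_lt_bic (hs : IsSpecialMinOrdering E bic ltA ltB)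
    (hbic : ∀ a b, bic a b → E a b) {d : A} {e : B} (hde : bic d e)
    {k : ℕ} {a : ℕ → A} {b : ℕ → B}
    (hblue : ∀ i ≤ k, E (a i) (b i) ∧ ¬ bic (a i) (b i))
    (hback : ∀ i < k, E (a (i + 1)) (b i) ∧ ¬ bic (a (i + 1)) (b i))
    (ha₀ : ltA (a 0) d) (hb₀ : ltB (b 0) e) :
    ∀ i ≤ k, ltA (a i) d ∧ ltB (b i) e := by
  intro i
  induction i with
  | zero => exact fun _ => ⟨ha₀, hb₀⟩
  | succ i ih =>
    intro hi
    obtain ⟨had, hbe⟩ := ih (by omega)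
    obtain ⟨hab, hab'⟩ := hblue i (by omega)
    obtain ⟨ha'b, ha'b'⟩ := hback i hi
    have ha'd : ltA (a (i + 1)) d := hs.lt_bic_fst_of_adj hbic hde hab hab' had hbe ha'b
    exact ⟨ha'd, hs.lt_bic_snd_of_adj hbic hde ha'b ha'b' ha'd hbe (hblue (i + 1) hi).1⟩

end IsSpecialMinOrdering

theorem statement11_general (E bic : A → B → Prop)
    (hbic : ∀ a b, bic a b → E a b)
    (ltA : A → A → Prop) (ltB : B → B → Prop)
    (hspecial : IsSpecialMinOrdering E bic ltA ltB) :
    ¬ ∃ (k : ℕ) (a : ℕ → A) (b : ℕ → B) (c d : A) (e : B),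
        (∀ i ≤ k, E (a i) (b i) ∧ ¬ bic (a i) (b i)) ∧
        (∀ i < k, E (a (i + 1)) (b i) ∧ ¬ bic (a (i + 1)) (b i)) ∧
        (E c (b k) ∧ ¬ bic c (b k)) ∧
        bic d e ∧
        ltA (a 0) d ∧ ltA d c ∧ ltB (b 0) e := by
  rintro ⟨k, a, b, c, d, e, hblue, hback, ⟨hc, -⟩, hde, ha₀, hdc, hb₀⟩
  have := hspecial.1.1
  obtain ⟨had, hbe⟩ := hspecial.blue_walk_lt_bic hbic hde hblue hback ha₀ hb₀ k le_rfl
  obtain ⟨hab, hab'⟩ := hblue k le_rfl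
  exact asymm hdc (hspecial.lt_bic_fst_of_adj hbic hde hab hab' had hbe hc)

/-- in a weakly balanced bipartite signed graph with a special min
ordering there does not exist a walk `a_0, b_0, a_1, b_1, …, a_k, b_k, c` all of whose
edges `a_0b_0, b_0a_1, a_1b_1, …, a_kb_k, b_kc` are blue, together with a bicoloured
edge `de` such that `a_0 < d < c` (in `A`) and `b_0 < e` (in `B`). -/
theorem statement11 [Fintype A] [Fintype B] (E bic : A → B → Prop)
    (hbic : ∀ a b, bic a b → E a b)
    (ltA : A → A → Prop) (ltB : B → B → Prop)
    (hspecial : IsSpecialMinOrdering E bic ltA ltB) :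
    ¬ ∃ (k : ℕ) (a : ℕ → A) (b : ℕ → B) (c d : A) (e : B),
        (∀ i ≤ k, E (a i) (b i) ∧ ¬ bic (a i) (b i)) ∧
        (∀ i < k, E (a (i + 1)) (b i) ∧ ¬ bic (a (i + 1)) (b i)) ∧
        (E c (b k) ∧ ¬ bic c (b k)) ∧
        bic d e ∧
        ltA (a 0) d ∧ ltA d c ∧ ltB (b 0) e :=
  statement11_general E bic hbic ltA ltB hspecial
end

section
/- Let Ĥ be a weakly balanced bipartite signed graph (no purely red edges) whose underlying graph H is a bipartite chain graph. Then Ĥ has a special min ordering if and only if Ĥ contains none of the following three signed graphs as an induced subgraph: (A) a 4-cycle whose edges alternate blue and bicoloured; (B) an induced path on four vertices whose two end edges are bicoloured and whose middle edge is blue; (C) the graph on six vertices a, d, e in one part and b, c, f in the other, with all nine possible edges present except dc, where the edges ac, af, df are bicoloured and the edges ab, db, eb, ec, ef are blue. -/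
variable {A B : Type*}

/-- Forbidden graph (A): an induced 4-cycle `a, b, a', b'` whose edges alternate
blue and bicoloured. -/
def PatternA (E bic : A → B → Prop) : Prop :=
  ∃ (a a' : A) (b b' : B), a ≠ a' ∧ b ≠ b' ∧
    E a b ∧ E a' b ∧ E a' b' ∧ E a b' ∧
    ¬ bic a b ∧ bic a' b ∧ ¬ bic a' b' ∧ bic a b'

/-- Forbidden graph (B): an induced path `b, a, b', a'` on four vertices whose two end
edges (`ab` and `a'b'`) are bicoloured and whose middle edge (`ab'`) is blue. -/
def PatternB (E bic : A → B → Prop) : Prop :=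
  ∃ (a a' : A) (b b' : B), a ≠ a' ∧ b ≠ b' ∧
    E a b ∧ E a b' ∧ E a' b' ∧ ¬ E a' b ∧
    bic a b ∧ ¬ bic a b' ∧ bic a' b'

/-- Forbidden graph (C): six vertices `a, d, e` in one part and `b, c, f` in the other,
with all nine possible edges present except `dc`, where `ac`, `af`, `df` are bicoloured
and `ab`, `db`, `eb`, `ec`, `ef` are blue. -/
def PatternC (E bic : A → B → Prop) : Prop :=
  ∃ (a d e : A) (b c f : B),
    a ≠ d ∧ a ≠ e ∧ d ≠ e ∧ b ≠ c ∧ b ≠ f ∧ c ≠ f ∧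
    E a b ∧ E a c ∧ E a f ∧ E d b ∧ E d f ∧ E e b ∧ E e c ∧ E e f ∧ ¬ E d c ∧
    bic a c ∧ bic a f ∧ bic d f ∧
    ¬ bic a b ∧ ¬ bic d b ∧ ¬ bic e b ∧ ¬ bic e c ∧ ¬ bic e f


/-!
In a chain graph the neighbourhoods on each side are nested. Order `A` by the forced constraints
(a bicoloured neighbour before a blue one) and, where no forced constraint says otherwise, by
decreasing neighbourhood; order `B` by its forced constraints together with those the min
condition imposes across forced pairs of `A`. Excluding (A) makes the forced relations
transitive, excluding (B) on the flipped graph makes bicoloured edges at `a'` edges at `a` when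
`a` is forced before `a'`, and excluding (C) keeps the constraints on `B` from contradicting each
other. Both relations are then strict partial orders, and any linear extensions of them form a
special min ordering. Conversely, in each forbidden graph the special constraints either
contradict each other or, through the min condition, force a missing edge.
-/

theorem IsStrictOrder.exists_isStrictTotalOrder_le {α : Type*} {r : α → α → Prop}
    (hr : IsStrictOrder α r) : ∃ lt, IsStrictTotalOrder α lt ∧ ∀ a b, r a b → lt a b := by
  let := partialOrderOfSO r
  refine ⟨(· < · : LinearExtension α → LinearExtension α → Prop),
    (inferInstance : IsStrictTotalOrder (LinearExtension α) (· < ·)),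
    fun a b hab => lt_of_le_of_ne (toLinearExtension.monotone (Or.inr hab)) ?_⟩
  rintro rfl
  exact irrefl a hab

variable {E bic : A → B → Prop}

def IsChainGraph (E : A → B → Prop) : Prop :=
  ¬ ∃ (a a' : A) (b b' : B), E a b ∧ E a' b' ∧ ¬ E a b' ∧ ¬ E a' b

theorem IsChainGraph.flip (h : IsChainGraph E) : IsChainGraph (flip E) :=
  fun ⟨b, b', a, a', hab, ha'b', hna'b, hnab'⟩ => h ⟨a, a', b, b', hab, ha'b', hnab', hna'b⟩

theorem IsChainGraph.subset_or_subset (h : IsChainGraph E) (a a' : A) :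
    (∀ b, E a b → E a' b) ∨ (∀ b, E a' b → E a b) := by
  by_contra! ⟨⟨b, hab, hna'b⟩, ⟨b', ha'b', hnab'⟩⟩
  exact h ⟨a, a', b, b', hab, ha'b', hnab', hna'b⟩

theorem IsChainGraph.subset_of_adj_of_not_adj (h : IsChainGraph E) {a a' : A} {b : B}
    (ha'b : E a' b) (hnab : ¬ E a b) : ∀ x, E a x → E a' x :=
  (h.subset_or_subset a a').resolve_right fun hsub => hnab (hsub b ha'b)

section Necessity

variable {ltA : A → A → Prop} {ltB : B → B → Prop}

theorem IsSpecialMinOrdering.flip (h : IsSpecialMinOrdering E bic ltA ltB) :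
    IsSpecialMinOrdering (flip E) (flip bic) ltB ltA := by
  obtain ⟨⟨hA, hB, hmin⟩, hbicB, hbicA⟩ := h
  exact ⟨⟨hB, hA, fun b b' a a' hba hb'a' hbb' ha'a => hmin a' a b' b hb'a' hba ha'a hbb'⟩,
    hbicA, hbicB⟩

theorem IsSpecialMinOrdering.not_patternA (h : IsSpecialMinOrdering E bic ltA ltB) :
    ¬ PatternA E bic := by
  obtain ⟨⟨-, hB, -⟩, hbicB, -⟩ := h
  rintro ⟨a, a', b, b', -, -, hab, -, ha'b', -, hnab, hca'b, hna'b', hcab'⟩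
  exact asymm (hbicB a b' b hcab' hab hnab) (hbicB a' b b' hca'b ha'b' hna'b')

theorem IsSpecialMinOrdering.not_patternB (h : IsSpecialMinOrdering E bic ltA ltB) :
    ¬ PatternB E bic := by
  obtain ⟨⟨-, -, hmin⟩, hbicB, hbicA⟩ := h
  rintro ⟨a, a', b, b', -, -, hab, hab', ha'b', hna'b, hcab, hnab', hca'b'⟩
  exact hna'b (hmin a' a b' b ha'b' hab (hbicA b' a' a hca'b' hab' hnab')
    (hbicB a b b' hcab hab' hnab'))

theorem IsSpecialMinOrdering.not_patternC (h : IsSpecialMinOrdering E bic ltA ltB) :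
    ¬ PatternC E bic := by
  obtain ⟨⟨-, -, hmin⟩, hbicB, hbicA⟩ := h
  rintro ⟨a, d, e, b, c, f, -, -, -, -, -, -, hab, -, -, hdb, -, -, hec, hef,
    hndc, hcac, -, hcdf, hnab, -, -, -, hnef⟩
  exact hndc (hmin d e b c hdb hec (hbicA f d e hcdf hef hnef) (hbicB a c b hcac hab hnab))

end Necessity

section Sufficiency

variable (E bic) in
def ForcedBefore (b b' : B) : Prop :=
  ∃ a, bic a b ∧ E a b' ∧ ¬ bic a b'

variable (E bic) in
/-- Outside the forced constraints, `A` is ordered by decreasing neighbourhood; then the min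
condition can fail only along forced pairs, which `CoupledBefore` takes care of. -/
def DefaultBefore (a a' : A) : Prop :=
  (∀ b, E a' b → E a b) ∧ (∃ b, E a b ∧ ¬ E a' b) ∧ ¬ ForcedBefore (flip E) (flip bic) a' a

variable (E bic) in
/-- The order the min condition imposes on `B` once `a` is forced before `a'`. -/
def CoupledBefore (b b' : B) : Prop :=
  ∃ a a', ForcedBefore (flip E) (flip bic) a a' ∧ E a b ∧ E a' b' ∧ ¬ E a b'

variable (E bic) in
def BeforeA (a a' : A) : Prop :=
  ForcedBefore (flip E) (flip bic) a a' ∨ DefaultBefore E bic a a'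

variable (E bic) in
def BeforeB (b b' : B) : Prop :=
  ForcedBefore E bic b b' ∨ CoupledBefore E bic b b'

theorem forcedBefore_irrefl (b : B) : ¬ ForcedBefore E bic b b :=
  fun ⟨_, hab, _, hnab⟩ => hnab hab

theorem patternA_of_bic (hbic : ∀ a b, bic a b → E a b) {a a' : A} {b b' : B}
    (hab : E a b) (ha'b' : E a' b') (hnab : ¬ bic a b) (ha'b : bic a' b)
    (hna'b' : ¬ bic a' b') (hab' : bic a b') : PatternA E bic :=
  ⟨a, a', b, b', fun h => hnab (h ▸ ha'b), fun h => hnab (h ▸ hab'),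
    hab, hbic _ _ ha'b, ha'b', hbic _ _ hab', hnab, ha'b, hna'b', hab'⟩

theorem forcedBefore_trans (hbic : ∀ a b, bic a b → E a b) (hch : IsChainGraph E)
    (noA : ¬ PatternA E bic) {b₁ b₂ b₃ : B} :
    ForcedBefore E bic b₁ b₂ → ForcedBefore E bic b₂ b₃ → ForcedBefore E bic b₁ b₃ := by
  rintro ⟨a₁, ha₁b₁, ha₁b₂, hna₁b₂⟩ ⟨a₂, ha₂b₂, ha₂b₃, hna₂b₃⟩
  rcases hch.subset_or_subset a₂ a₁ with hsub | hsub
  · by_cases ha₁b₃ : bic a₁ b₃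
    · exact (noA (patternA_of_bic hbic ha₁b₂ ha₂b₃ hna₁b₂ ha₂b₂ hna₂b₃ ha₁b₃)).elim
    · exact ⟨a₁, ha₁b₁, hsub _ ha₂b₃, ha₁b₃⟩
  · by_cases ha₂b₁ : bic a₂ b₁
    · exact ⟨a₂, ha₂b₁, ha₂b₃, hna₂b₃⟩
    · exact (noA (patternA_of_bic hbic (hsub _ (hbic _ _ ha₁b₁)) ha₁b₂ ha₂b₁ ha₁b₁ hna₁b₂
        ha₂b₂)).elim

theorem adj_of_forcedBefore_of_bic (hbic : ∀ a b, bic a b → E a b) (noB : ¬ PatternB E bic)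
    {b b' : B} (h : ForcedBefore E bic b b') {a' : A} (ha'b' : bic a' b') : E a' b := by
  obtain ⟨a, hab, hab', hnab'⟩ := h
  by_contra hna'b
  exact noB ⟨a, a', b, b', fun h => hnab' (h ▸ ha'b'), fun h => hnab' (h ▸ hab),
    hbic _ _ hab, hab', hbic _ _ ha'b', hna'b, hab, hnab', ha'b'⟩

theorem forcedBefore_of_defaultBefore_of_forcedBefore (hbic : ∀ a b, bic a b → E a b) {x y z : A}
    (hxy : DefaultBefore E bic x y) (hyz : ForcedBefore (flip E) (flip bic) y z) :
    ForcedBefore (flip E) (flip bic) x z := by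
  obtain ⟨hsub, -, hnyx⟩ := hxy
  obtain ⟨b, hyb, hzb, hnzb⟩ := hyz
  refine ⟨b, ?_, hzb, hnzb⟩
  by_contra hnxb
  exact hnyx ⟨b, hyb, hsub b (hbic _ _ hyb), hnxb⟩

theorem beforeA_irrefl (a : A) : ¬ BeforeA E bic a a := by
  rintro (h | ⟨-, ⟨b, hab, hnab⟩, -⟩)
  exacts [forcedBefore_irrefl a h, hnab hab]

theorem beforeA_trans (hbic : ∀ a b, bic a b → E a b) (hch : IsChainGraph E)
    (noA' : ¬ PatternA (flip E) (flip bic)) {x y z : A} :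
    BeforeA E bic x y → BeforeA E bic y z → BeforeA E bic x z := by
  have forced_trans {p q r : A} := forcedBefore_trans (b₁ := p) (b₂ := q) (b₃ := r)
    (fun b a h => hbic a b h) hch.flip noA'
  rintro (hxy | hxy) (hyz | hyz)
  · exact .inl (forced_trans hxy hyz)
  · obtain ⟨b, hxb, hyb, hnyb⟩ := hxy
    obtain ⟨hzy, -, hnzy⟩ := hyz
    by_cases hzb : E z b
    · by_cases hczb : bic z b
      · exact (hnzy ⟨b, hczb, hyb, hnyb⟩).elim
      · exact .inl ⟨b, hxb, hzb, hczb⟩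
    · exact .inr ⟨hch.subset_of_adj_of_not_adj (hbic _ _ hxb) hzb, ⟨b, hbic _ _ hxb, hzb⟩,
        fun hzx => hnzy (forced_trans hzx ⟨b, hxb, hyb, hnyb⟩)⟩
  · exact .inl (forcedBefore_of_defaultBefore_of_forcedBefore hbic hxy hyz)
  · obtain ⟨hyx, -, hnyx⟩ := hxy
    obtain ⟨hzy, ⟨b, hyb, hnzb⟩, hnzy⟩ := hyz
    exact .inr ⟨fun b hzb => hyx b (hzy b hzb), ⟨b, hyx b hyb, hnzb⟩, fun hzx =>
      hnyx (forcedBefore_of_defaultBefore_of_forcedBefore hbic ⟨hzy, ⟨b, hyb, hnzb⟩, hnzy⟩ hzx)⟩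

theorem patternC_of_coupledBefore (hbic : ∀ a b, bic a b → E a b) (hch : IsChainGraph E)
    (noA : ¬ PatternA E bic) (noB' : ¬ PatternB (flip E) (flip bic)) {b c : B}
    (hbc : CoupledBefore E bic b c) {a : A} (hac : bic a c) (hnab : ¬ bic a b) :
    PatternC E bic := by
  obtain ⟨d, e, hde, hdb, hec, hndc⟩ := hbc
  obtain ⟨f, hdf, hef, hnef⟩ := id hde
  have adj_d {a' : A} (hda' : ForcedBefore (flip E) (flip bic) d a') {x : B} (ha'x : bic a' x) :
      E d x := adj_of_forcedBefore_of_bic (fun b a h => hbic a b h) noB' hda' ha'x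
  have hNda := hch.subset_of_adj_of_not_adj (hbic _ _ hac) hndc
  have hNde := hch.subset_of_adj_of_not_adj hec hndc
  have hab := hNda b hdb
  have hnec : ¬ bic e c := fun h => hndc (adj_d hde h)
  have hneb : ¬ bic e b := fun h =>
    forcedBefore_irrefl _ (forcedBefore_trans hbic hch noA ⟨e, h, hec, hnec⟩ ⟨a, hac, hab, hnab⟩)
  have hndb : ¬ bic d b := fun h => hndc (adj_d ⟨b, h, hab, hnab⟩ hac)
  have haf := hNda f (hbic _ _ hdf)
  have hcaf : bic a f := by
    by_contra h
    exact hndc (adj_d ⟨f, hdf, haf, h⟩ hac)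
  exact ⟨a, d, e, b, c, f, fun h => hndc (h ▸ hbic _ _ hac), fun h => hnec (h ▸ hac),
    fun h => hndc (h ▸ hec), fun h => hnab (h ▸ hac), fun h => hndb (h ▸ hdf),
    fun h => hndc (h ▸ hbic _ _ hdf), hab, hbic _ _ hac, haf, hdb, hbic _ _ hdf, hNde b hdb, hec,
    hef, hndc, hac, hcaf, hdf, hnab, hndb, hneb, hnec, hnef⟩

theorem beforeB_irrefl (b : B) : ¬ BeforeB E bic b b := by
  rintro (h | ⟨a, a', -, hab, -, hnab⟩)
  exacts [forcedBefore_irrefl b h, hnab hab]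

theorem beforeB_trans (hbic : ∀ a b, bic a b → E a b) (hch : IsChainGraph E)
    (noA : ¬ PatternA E bic) (noB' : ¬ PatternB (flip E) (flip bic)) (noC : ¬ PatternC E bic)
    {b₁ b₂ b₃ : B} : BeforeB E bic b₁ b₂ → BeforeB E bic b₂ b₃ → BeforeB E bic b₁ b₃ := by
  rintro (h₁₂ | h₁₂) (h₂₃ | h₂₃)
  · exact .inl (forcedBefore_trans hbic hch noA h₁₂ h₂₃)
  · obtain ⟨a, hab₁, hab₂, hnab₂⟩ := h₁₂
    obtain ⟨d, e, hde, hdb₂, heb₃, hndb₃⟩ := id h₂₃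
    by_cases hab₃ : E a b₃
    · by_cases hcab₃ : bic a b₃
      · exact (noC (patternC_of_coupledBefore hbic hch noA noB' h₂₃ hcab₃ hnab₂)).elim
      · exact .inl ⟨a, hab₁, hab₃, hcab₃⟩
    · have heb₁ := hch.subset_of_adj_of_not_adj heb₃ hab₃ b₁ (hbic _ _ hab₁)
      by_cases hceb₁ : bic e b₁
      · exact .inr ⟨d, e, hde, adj_of_forcedBefore_of_bic (fun b a h => hbic a b h) noB' hde hceb₁,
          heb₃, hndb₃⟩
      · exact .inr ⟨a, e, ⟨b₁, hab₁, heb₁, hceb₁⟩, hbic _ _ hab₁, heb₃, hab₃⟩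
  · obtain ⟨a, hab₂, hab₃, hnab₃⟩ := h₂₃
    by_cases hcab₁ : bic a b₁
    · exact .inl ⟨a, hcab₁, hab₃, hnab₃⟩
    · exact (noC (patternC_of_coupledBefore hbic hch noA noB' h₁₂ hab₂ hcab₁)).elim
  · obtain ⟨d, -, -, hdb₁, -, hndb₂⟩ := h₁₂
    obtain ⟨d', e', hd'e', hd'b₂, he'b₃, hnd'b₃⟩ := h₂₃
    exact .inr ⟨d', e', hd'e', hch.subset_of_adj_of_not_adj hd'b₂ hndb₂ b₁ hdb₁, he'b₃, hnd'b₃⟩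

theorem exists_isSpecialMinOrdering (hbic : ∀ a b, bic a b → E a b) (hch : IsChainGraph E)
    (noA : ¬ PatternA E bic) (noA' : ¬ PatternA (flip E) (flip bic))
    (noB' : ¬ PatternB (flip E) (flip bic)) (noC : ¬ PatternC E bic) :
    ∃ (ltA : A → A → Prop) (ltB : B → B → Prop), IsSpecialMinOrdering E bic ltA ltB := by
  obtain ⟨ltA, hA, hltA⟩ := IsStrictOrder.exists_isStrictTotalOrder_le (r := BeforeA E bic)
    { irrefl := beforeA_irrefl, trans := fun _ _ _ => beforeA_trans hbic hch noA' }
  obtain ⟨ltB, hB, hltB⟩ := IsStrictOrder.exists_isStrictTotalOrder_le (r := BeforeB E bic)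
    { irrefl := beforeB_irrefl, trans := fun _ _ _ => beforeB_trans hbic hch noA noB' noC }
  refine ⟨ltA, ltB, ⟨hA, hB, ?_⟩, fun a b b' h₁ h₂ h₃ => hltB _ _ (Or.inl ⟨a, h₁, h₂, h₃⟩),
    fun b a a' h₁ h₂ h₃ => hltA _ _ (Or.inl ⟨b, h₁, h₂, h₃⟩)⟩
  intro a a' b b' hab ha'b' haa' hb'b
  by_contra hnab'
  by_cases hforced : ForcedBefore (flip E) (flip bic) a a'
  · exact asymm hb'b (hltB _ _ (Or.inr ⟨a, a', hforced, hab, ha'b', hnab'⟩))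
  · exact asymm haa' (hltA _ _ (Or.inr
      ⟨hch.subset_of_adj_of_not_adj ha'b' hnab', ⟨b', ha'b', hnab'⟩, hforced⟩))

end Sufficiency

theorem statement19_general (E bic : A → B → Prop)
    (hbic : ∀ a b, bic a b → E a b)
    (hchaingraph : ¬ ∃ (a a' : A) (b b' : B), E a b ∧ E a' b' ∧ ¬ E a b' ∧ ¬ E a' b) :
    (∃ (ltA : A → A → Prop) (ltB : B → B → Prop), IsSpecialMinOrdering E bic ltA ltB) ↔
      ¬ (PatternA E bic ∨ PatternA (fun b a => E a b) (fun b a => bic a b) ∨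
         PatternB E bic ∨ PatternB (fun b a => E a b) (fun b a => bic a b) ∨
         PatternC E bic ∨ PatternC (fun b a => E a b) (fun b a => bic a b)) := by
  constructor
  · rintro ⟨ltA, ltB, h⟩ (hp | hp | hp | hp | hp | hp)
    exacts [h.not_patternA hp, h.flip.not_patternA hp, h.not_patternB hp, h.flip.not_patternB hp,
      h.not_patternC hp, h.flip.not_patternC hp]
  · intro hnp
    simp only [not_or] at hnp
    obtain ⟨noA, noA', -, noB', noC, -⟩ := hnp
    exact exists_isSpecialMinOrdering hbic hchaingraph noA noA' noB' noC

/-- a weakly balanced bipartite signed graph (no purely red edges) whose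
underlying graph is a bipartite chain graph (no induced `2K_2`) has a special min
ordering if and only if it contains none of the forbidden induced subgraphs (A), (B),
(C) (in either orientation of the two parts). -/
theorem statement19 [Fintype A] [Fintype B] (E bic : A → B → Prop)
    (hbic : ∀ a b, bic a b → E a b)
    (hchaingraph : ¬ ∃ (a a' : A) (b b' : B), E a b ∧ E a' b' ∧ ¬ E a b' ∧ ¬ E a' b) :
    (∃ (ltA : A → A → Prop) (ltB : B → B → Prop), IsSpecialMinOrdering E bic ltA ltB) ↔
      ¬ (PatternA E bic ∨ PatternA (fun b a => E a b) (fun b a => bic a b) ∨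
         PatternB E bic ∨ PatternB (fun b a => E a b) (fun b a => bic a b) ∨
         PatternC E bic ∨ PatternC (fun b a => E a b) (fun b a => bic a b)) :=
  statement19_general E bic hbic hchaingraph
end
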